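/- Let f_0,...,f_{m-1} be homeomorphisms of a compact metric space (X,d) and φ continuous on X. Then the topological pressure of the free semigroup action generated by f_0,...,f_{m-1} with potential φ equals the topological pressure of the free semigroup action generated by the inverses: P(f_0,...,f_{m-1},φ) = P(f_0^{-1},...,f_{m-1}^{-1},φ). -/

import Mathlib

open Filter Topology

section FSG

variable {X : Type*}

/-- Apply the maps of the free semigroup action along a word; the first letter of the
list is applied first. -/
def fw {ι : Type*} (f : ι → X → X) (w : List ι) (x : X) : X :=
  w.foldl (fun y a => f a y) x

/-- The Birkhoff-type sum `(S_w φ)(x) = ∑_{w' ≤ w} φ(f_{w'} x)`. -/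
noncomputable def Sw {ι : Type*} (f : ι → X → X) (φ : X → ℝ) (w : List ι) (x : X) : ℝ :=
  ∑ i ∈ Finset.range w.length, φ (fw f (w.take i) x)

variable [MetricSpace X]

/-- `F` is a `(w, ε, r)`-spanning set for the free semigroup action. -/
def rSpan {ι : Type*} (f : ι → X → X) (w : List ι) (ε r : ℝ) (F : Finset X) : Prop :=
  ∀ x : X, ∃ y ∈ F, (1 - r) * w.length <
    (((Finset.range w.length).filter
      (fun i => dist (fw f (w.take i) x) (fw f (w.take i) y) < ε)).card : ℝ)

/-- `E` is a `(w, ε, r)`-separated set for the free semigroup action. -/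
def rSep {ι : Type*} (f : ι → X → X) (w : List ι) (ε r : ℝ) (E : Finset X) : Prop :=
  ∀ x ∈ E, ∀ y ∈ E, x ≠ y → r * w.length <
    (((Finset.range w.length).filter
      (fun i => ε ≤ dist (fw f (w.take i) x) (fw f (w.take i) y))).card : ℝ)

/-- `Q_w(f_0,…,f_{m-1},φ,ε,r)` (spanning-set version). -/
noncomputable def Qw {ι : Type*} (f : ι → X → X) (φ : X → ℝ) (w : List ι) (ε r : ℝ) : ℝ :=
  sInf {s : ℝ | ∃ F : Finset X, rSpan f w ε r F ∧ s = ∑ x ∈ F, Real.exp (Sw f φ w x)}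

/-- `Q_w^s(f_0,…,f_{m-1},φ,ε,r)` (separated-set version). -/
noncomputable def Qws {ι : Type*} (f : ι → X → X) (φ : X → ℝ) (w : List ι) (ε r : ℝ) : ℝ :=
  sSup {s : ℝ | ∃ E : Finset X, rSep f w ε r E ∧ s = ∑ x ∈ E, Real.exp (Sw f φ w x)}

/-- `Q_n(f_0,…,f_{m-1},φ,ε,r) = (1/m^n) ∑_{|w|=n} Q_w`. -/
noncomputable def Qn {ι : Type*} [Fintype ι] (f : ι → X → X) (φ : X → ℝ)
    (n : ℕ) (ε r : ℝ) : ℝ :=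
  (1 / (Fintype.card ι : ℝ) ^ n) * ∑ σ : Fin n → ι, Qw f φ (List.ofFn σ) ε r

/-- `Q_n^s(f_0,…,f_{m-1},φ,ε,r) = (1/m^n) ∑_{|w|=n} Q_w^s`. -/
noncomputable def Qns {ι : Type*} [Fintype ι] (f : ι → X → X) (φ : X → ℝ)
    (n : ℕ) (ε r : ℝ) : ℝ :=
  (1 / (Fintype.card ι : ℝ) ^ n) * ∑ σ : Fin n → ι, Qws f φ (List.ofFn σ) ε r

/-- The topological `r`-pressure of the free semigroup action (spanning sets);
the limit as `ε → 0` is realised as a supremum over `ε > 0`, the quantity being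
monotone in `ε`. -/
noncomputable def Pr {ι : Type*} [Fintype ι] (f : ι → X → X) (φ : X → ℝ) (r : ℝ) : EReal :=
  ⨆ ε ∈ Set.Ioi (0 : ℝ), atTop.limsup fun n : ℕ =>
    (((n : ℝ)⁻¹ * Real.log (Qn f φ n ε r) : ℝ) : EReal)

/-- `P^s_r(f_0,…,f_{m-1},φ,ε)`, the fixed-`ε` separated-set `r`-pressure. -/
noncomputable def Pse {ι : Type*} [Fintype ι] (f : ι → X → X) (φ : X → ℝ) (ε r : ℝ) : EReal :=
  atTop.limsup fun n : ℕ => (((n : ℝ)⁻¹ * Real.log (Qns f φ n ε r) : ℝ) : EReal)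

/-- The topological `r`-pressure of the free semigroup action (separated sets). -/
noncomputable def Ps {ι : Type*} [Fintype ι] (f : ι → X → X) (φ : X → ℝ) (r : ℝ) : EReal :=
  ⨆ ε ∈ Set.Ioi (0 : ℝ), Pse f φ ε r

/-- Liminf variant of the separated-set topological `r`-pressure. -/
noncomputable def PsInf {ι : Type*} [Fintype ι] (f : ι → X → X) (φ : X → ℝ) (r : ℝ) : EReal :=
  ⨆ ε ∈ Set.Ioi (0 : ℝ), atTop.liminf fun n : ℕ =>
    (((n : ℝ)⁻¹ * Real.log (Qns f φ n ε r) : ℝ) : EReal)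

/-- `F` is a `(w, ε)`-spanning set for the Bowen metric `d_w` of the free semigroup action. -/
def span0 {ι : Type*} (f : ι → X → X) (w : List ι) (ε : ℝ) (F : Finset X) : Prop :=
  ∀ x : X, ∃ y ∈ F, ∀ i < w.length,
    dist (fw f (w.take i) x) (fw f (w.take i) y) ≤ ε

/-- `E` is a `(w, ε)`-separated set for the Bowen metric `d_w`. -/
def sep0 {ι : Type*} (f : ι → X → X) (w : List ι) (ε : ℝ) (E : Finset X) : Prop :=
  ∀ x ∈ E, ∀ y ∈ E, x ≠ y → ∃ i < w.length,
    ε < dist (fw f (w.take i) x) (fw f (w.take i) y)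

noncomputable def Qw0 {ι : Type*} (f : ι → X → X) (φ : X → ℝ) (w : List ι) (ε : ℝ) : ℝ :=
  sInf {s : ℝ | ∃ F : Finset X, span0 f w ε F ∧ s = ∑ x ∈ F, Real.exp (Sw f φ w x)}

noncomputable def Qws0 {ι : Type*} (f : ι → X → X) (φ : X → ℝ) (w : List ι) (ε : ℝ) : ℝ :=
  sSup {s : ℝ | ∃ E : Finset X, sep0 f w ε E ∧ s = ∑ x ∈ E, Real.exp (Sw f φ w x)}

noncomputable def Qn0 {ι : Type*} [Fintype ι] (f : ι → X → X) (φ : X → ℝ) (n : ℕ) (ε : ℝ) : ℝ :=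
  (1 / (Fintype.card ι : ℝ) ^ n) * ∑ σ : Fin n → ι, Qw0 f φ (List.ofFn σ) ε

noncomputable def Qns0 {ι : Type*} [Fintype ι] (f : ι → X → X) (φ : X → ℝ) (n : ℕ) (ε : ℝ) : ℝ :=
  (1 / (Fintype.card ι : ℝ) ^ n) * ∑ σ : Fin n → ι, Qws0 f φ (List.ofFn σ) ε

/-- The topological pressure of the free semigroup action. -/
noncomputable def P0 {ι : Type*} [Fintype ι] (f : ι → X → X) (φ : X → ℝ) : EReal :=
  ⨆ ε ∈ Set.Ioi (0 : ℝ), atTop.limsup fun n : ℕ =>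
    (((n : ℝ)⁻¹ * Real.log (Qn0 f φ n ε) : ℝ) : EReal)

/-- `r_w(ε,r)`: the smallest cardinality of a `(w,ε,r)`-spanning set. -/
noncomputable def rSpanCard {ι : Type*} (f : ι → X → X) (w : List ι) (ε r : ℝ) : ℕ :=
  sInf {k : ℕ | ∃ F : Finset X, rSpan f w ε r F ∧ F.card = k}

/-- The topological `r`-entropy of the free semigroup action. -/
noncomputable def hrEnt {ι : Type*} [Fintype ι] (f : ι → X → X) (r : ℝ) : EReal :=
  ⨆ ε ∈ Set.Ioi (0 : ℝ), atTop.limsup fun n : ℕ =>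
    (((n : ℝ)⁻¹ * Real.log ((1 / (Fintype.card ι : ℝ) ^ n) *
      ∑ σ : Fin n → ι, (rSpanCard f (List.ofFn σ) ε r : ℝ)) : ℝ) : EReal)

end FSG

/-!
For a word `w`, the map `f_w` sends a `(w, δ)`-spanning set of the action of the `f_i` to a
`(w̄, ε)`-spanning set of the action of the `f_i⁻¹` along the reversed word `w̄`: the `j`-th
iterate of `f_w x` under the inverse action is the forward iterate of `x` along the prefix of `w`
of length `|w| - j ≥ 1`, one letter beyond a prefix controlled by the spanning property, and that
last letter only costs passing from `δ` to `ε` by uniform continuity. The Birkhoff sums at `x`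
and at `f_w x` differ by two boundary terms, hence by at most `2‖φ‖∞`. So
`Q_w̄(f⁻¹, ε) ≤ e^{2‖φ‖∞} Q_w(f, δ)`; since reversal permutes the words of length `n`, the same
bound holds for the averages `Q_n`, which gives `P(f⁻¹, φ) ≤ P(f, φ)`. Symmetry gives equality.
-/

open Function

section Words

variable {ι X : Type*}

theorem fw_nil (f : ι → X → X) (x : X) : fw f [] x = x := rfl

theorem fw_cons (f : ι → X → X) (a : ι) (w : List ι) (x : X) :
    fw f (a :: w) x = fw f w (f a x) := rfl

theorem fw_append (f : ι → X → X) (u v : List ι) (x : X) :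
    fw f (u ++ v) x = fw f v (fw f u x) := List.foldl_append

theorem continuous_fw [TopologicalSpace X] {f : ι → X → X} (hf : ∀ i, Continuous (f i))
    (w : List ι) : Continuous (fw f w) := by
  induction w with
  | nil => exact continuous_id
  | cons a w ih => exact ih.comp (hf a)

theorem abs_Sw_le (f : ι → X → X) {φ : X → ℝ} {C : ℝ} (hC : ∀ x, |φ x| ≤ C)
    (w : List ι) (x : X) : |Sw f φ w x| ≤ w.length * C := by
  refine (Finset.abs_sum_le_sum_abs _ _).trans ?_
  simpa using
    Finset.sum_le_card_nsmul (Finset.range w.length) _ C fun i _ => hC (fw f (w.take i) x)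

variable {f g : ι → X → X}

theorem leftInverse_fw_reverse (hgf : ∀ i, LeftInverse (g i) (f i)) (w : List ι) :
    LeftInverse (fw g w.reverse) (fw f w) := by
  induction w with
  | nil => exact fun _ => rfl
  | cons a w ih =>
    intro x
    rw [fw_cons, List.reverse_cons, fw_append, ih]
    exact hgf a x

theorem fw_take_reverse_fw (hgf : ∀ i, LeftInverse (g i) (f i)) (w : List ι) (j : ℕ) (x : X) :
    fw g (w.reverse.take j) (fw f w x) = fw f (w.take (w.length - j)) x := by
  have hsplit : fw f w x = fw f (w.drop (w.length - j)) (fw f (w.take (w.length - j)) x) := by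
    rw [← fw_append, List.take_append_drop]
  rw [List.take_reverse, hsplit, leftInverse_fw_reverse hgf]

theorem Sw_reverse_fw (hgf : ∀ i, LeftInverse (g i) (f i)) (φ : X → ℝ) (w : List ι) (x : X) :
    Sw g φ w.reverse (fw f w x) = Sw f φ w x - φ x + φ (fw f w x) := by
  set G : ℕ → ℝ := fun i => φ (fw f (w.take i) x)
  have hreflect : ∀ j ∈ Finset.range w.length,
      φ (fw g (w.reverse.take j) (fw f w x)) = G (w.length - 1 - j + 1) := by
    intro j hj
    rw [fw_take_reverse_fw hgf]
    congr 3
    have := Finset.mem_range.1 hj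
    omega
  have hshift := Finset.sum_range_succ' G w.length
  have hlast := Finset.sum_range_succ G w.length
  simp only [G, List.take_zero, List.take_length, fw_nil] at hshift hlast
  rw [Sw, Sw, List.length_reverse, Finset.sum_congr rfl hreflect,
    Finset.sum_range_reflect (fun i => G (i + 1))]
  simp only [G]
  linarith

end Words

section Metric

variable {ι X : Type*} [MetricSpace X]

theorem exists_span0 [CompactSpace X] {f : ι → X → X} (hf : ∀ i, Continuous (f i))
    (w : List ι) {δ : ℝ} (hδ : 0 < δ) : ∃ F : Finset X, span0 f w δ F := by
  let U : X → Set X := fun y =>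
    ⋂ i ∈ Finset.range w.length, fw f (w.take i) ⁻¹' Metric.closedBall (fw f (w.take i) y) δ
  have hU : ∀ y, U y ∈ 𝓝 y := fun y =>
    (Finset.iInter_mem_sets _).2 fun i _ =>
      (continuous_fw hf _).continuousAt.preimage_mem_nhds (Metric.closedBall_mem_nhds _ hδ)
  obtain ⟨F, -, hcover⟩ := isCompact_univ.elim_nhds_subcover U fun y _ => hU y
  refine ⟨F, fun x => ?_⟩
  obtain ⟨y, hyF, hxy⟩ := Set.mem_iUnion₂.1 (hcover (Set.mem_univ x))
  exact ⟨y, hyF, fun i hi => Set.mem_iInter₂.1 hxy i (Finset.mem_range.2 hi)⟩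

theorem exists_pos_forall_dist_le [CompactSpace X] [Finite ι] {f : ι → X → X}
    (hf : ∀ i, Continuous (f i)) {ε : ℝ} (hε : 0 < ε) :
    ∃ δ > 0, ∀ i a b, dist a b ≤ δ → dist (f i a) (f i b) ≤ ε := by
  obtain ⟨δ, hδ, hclose⟩ := Metric.uniformEquicontinuous_iff.1
    (uniformEquicontinuous_finite.2 fun i => CompactSpace.uniformContinuous_of_continuous (hf i))
    ε hε
  exact ⟨δ / 2, half_pos hδ, fun i a b hab => (hclose a b (by linarith) i).le⟩

variable {f g : ι → X → X}

theorem span0_reverse_image_fw [DecidableEq X] (hgf : ∀ i, LeftInverse (g i) (f i))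
    (hfg : ∀ i, LeftInverse (f i) (g i)) {δ ε : ℝ}
    (hδ : ∀ i a b, dist a b ≤ δ → dist (f i a) (f i b) ≤ ε) {w : List ι} {F : Finset X}
    (hF : span0 f w δ F) : span0 g w.reverse ε (F.image (fw f w)) := by
  intro z
  set x := fw g w.reverse z
  have hzx : fw f w x = z := by
    simpa using leftInverse_fw_reverse hfg w.reverse z
  obtain ⟨y, hyF, hy⟩ := hF x
  refine ⟨fw f w y, Finset.mem_image_of_mem _ hyF, fun j hj => ?_⟩
  rw [List.length_reverse] at hj
  obtain ⟨k, hk⟩ : ∃ k, w.length - j = k + 1 := ⟨w.length - j - 1, by omega⟩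
  have hkw : k < w.length := by omega
  rw [← hzx, fw_take_reverse_fw hgf, fw_take_reverse_fw hgf, hk,
    List.take_succ_eq_append_getElem hkw, fw_append, fw_append]
  exact hδ _ _ _ (hy k hkw)

theorem Qw0_reverse_le [CompactSpace X] (hf : ∀ i, Continuous (f i))
    (hgf : ∀ i, LeftInverse (g i) (f i)) (hfg : ∀ i, LeftInverse (f i) (g i))
    {φ : X → ℝ} {C : ℝ} (hC : ∀ x, |φ x| ≤ C) {δ ε : ℝ} (hδ₀ : 0 < δ)
    (hδ : ∀ i a b, dist a b ≤ δ → dist (f i a) (f i b) ≤ ε) (w : List ι) :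
    Qw0 g φ w.reverse ε ≤ Real.exp (2 * C) * Qw0 f φ w δ := by
  classical
  obtain ⟨F₀, hF₀⟩ := exists_span0 hf w hδ₀
  have hbdd : BddBelow {s : ℝ | ∃ F : Finset X, span0 g w.reverse ε F ∧
      s = ∑ x ∈ F, Real.exp (Sw g φ w.reverse x)} :=
    ⟨0, by rintro _ ⟨F, -, rfl⟩; positivity⟩
  rw [mul_comm, ← div_le_iff₀ (Real.exp_pos _)]
  refine le_csInf ⟨_, F₀, hF₀, rfl⟩ ?_
  rintro _ ⟨F, hF, rfl⟩
  rw [div_le_iff₀ (Real.exp_pos _)]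
  refine (csInf_le hbdd ⟨_, span0_reverse_image_fw hgf hfg hδ hF, rfl⟩).trans ?_
  rw [Finset.sum_image fun a _ b _ => (leftInverse_fw_reverse hgf w).injective.eq_iff.1,
    Finset.sum_mul]
  gcongr with y
  rw [Sw_reverse_fw hgf, ← Real.exp_add, Real.exp_le_exp]
  linarith [abs_le.1 (hC y), abs_le.1 (hC (fw f w y))]

theorem exp_neg_mul_le_Qw0 [CompactSpace X] [Nonempty X] (hf : ∀ i, Continuous (f i))
    {φ : X → ℝ} {C : ℝ} (hC : ∀ x, |φ x| ≤ C) {δ : ℝ} (hδ : 0 < δ) (w : List ι) :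
    Real.exp (-(w.length * C)) ≤ Qw0 f φ w δ := by
  obtain ⟨F₀, hF₀⟩ := exists_span0 hf w hδ
  refine le_csInf ⟨_, F₀, hF₀, rfl⟩ ?_
  rintro _ ⟨F, hF, rfl⟩
  obtain ⟨y, hyF, -⟩ := hF (Classical.arbitrary X)
  calc Real.exp (-(w.length * C)) ≤ Real.exp (Sw f φ w y) :=
        Real.exp_le_exp.2 (neg_le_of_abs_le (abs_Sw_le f hC w y))
    _ ≤ ∑ x ∈ F, Real.exp (Sw f φ w x) :=
        Finset.single_le_sum (fun x _ => (Real.exp_pos _).le) hyF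

end Metric

theorem List.ofFn_comp_rev {α : Type*} {n : ℕ} (σ : Fin n → α) :
    List.ofFn (σ ∘ Fin.rev) = (List.ofFn σ).reverse := by
  apply List.ext_getElem (by simp)
  intro i h₁ h₂
  simp only [List.getElem_ofFn, List.getElem_reverse, List.length_ofFn, Function.comp_apply]
  congr 1
  ext
  simp only [Fin.val_rev]
  omega

theorem Fintype.sum_ofFn_reverse {ι M : Type*} [Fintype ι] [AddCommMonoid M] (n : ℕ)
    (F : List ι → M) :
    ∑ σ : Fin n → ι, F (List.ofFn σ).reverse = ∑ σ : Fin n → ι, F (List.ofFn σ) :=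
  Fintype.sum_equiv (Equiv.arrowCongr Fin.revPerm (Equiv.refl ι)) _ _ fun σ =>
    congrArg F (List.ofFn_comp_rev σ).symm

section Averages

variable {ι X : Type*} [Fintype ι] [MetricSpace X] {f g : ι → X → X}

theorem Qn0_reverse_le [CompactSpace X] (hf : ∀ i, Continuous (f i))
    (hgf : ∀ i, LeftInverse (g i) (f i)) (hfg : ∀ i, LeftInverse (f i) (g i))
    {φ : X → ℝ} {C : ℝ} (hC : ∀ x, |φ x| ≤ C) {δ ε : ℝ} (hδ₀ : 0 < δ)
    (hδ : ∀ i a b, dist a b ≤ δ → dist (f i a) (f i b) ≤ ε) (n : ℕ) :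
    Qn0 g φ n ε ≤ Real.exp (2 * C) * Qn0 f φ n δ := by
  rw [Qn0, Qn0, ← Fintype.sum_ofFn_reverse n fun w => Qw0 g φ w ε, mul_left_comm,
    Finset.mul_sum _ _ (Real.exp (2 * C))]
  gcongr
  exact Qw0_reverse_le hf hgf hfg hC hδ₀ hδ _

theorem Qn0_pos [CompactSpace X] [Nonempty X] [Nonempty ι] (hf : ∀ i, Continuous (f i))
    {φ : X → ℝ} {C : ℝ} (hC : ∀ x, |φ x| ≤ C) {δ : ℝ} (hδ : 0 < δ) (n : ℕ) :
    0 < Qn0 f φ n δ := by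
  have hcard : (0 : ℝ) < Fintype.card ι := by exact_mod_cast Fintype.card_pos
  refine mul_pos (by positivity) (Finset.sum_pos (fun σ _ => ?_) Finset.univ_nonempty)
  exact (Real.exp_pos _).trans_le (exp_neg_mul_le_Qw0 hf hC hδ _)

theorem Qn0_eq_zero_of_isEmpty [IsEmpty X] (f : ι → X → X) (φ : X → ℝ) (n : ℕ) (ε : ℝ) :
    Qn0 f φ n ε = 0 := by
  have hQw0 : ∀ w, Qw0 f φ w ε = 0 := fun w => by
    have hset : {s : ℝ | ∃ F : Finset X, span0 f w ε F ∧
        s = ∑ x ∈ F, Real.exp (Sw f φ w x)} = {0} := by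
      ext s
      simp [Finset.eq_empty_of_isEmpty, span0]
    rw [Qw0, hset, csInf_singleton]
  simp [Qn0, hQw0]

theorem Qn0_eq_zero_of_isEmpty_index [IsEmpty ι] (f : ι → X → X) (φ : X → ℝ) {n : ℕ}
    (hn : n ≠ 0) (ε : ℝ) : Qn0 f φ n ε = 0 := by
  simp [Qn0, hn]

end Averages

theorem limsup_coe_le_of_le_div_add {u v : ℕ → ℝ} (K : ℝ)
    (h : ∀ᶠ n in atTop, u n ≤ K / n + v n) :
    limsup (fun n => (u n : EReal)) atTop ≤ limsup (fun n => (v n : EReal)) atTop := by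
  have hK : limsup (fun n : ℕ => ((K / n : ℝ) : EReal)) atTop = 0 :=
    (EReal.tendsto_coe.2 (tendsto_const_div_atTop_nhds_zero_nat K)).limsup_eq
  calc limsup (fun n => (u n : EReal)) atTop
      ≤ limsup ((fun n : ℕ => ((K / n : ℝ) : EReal)) + fun n => (v n : EReal)) atTop :=
        limsup_le_limsup (h.mono fun n hn => by
          rw [Pi.add_apply, ← EReal.coe_add]
          exact EReal.coe_le_coe_iff.2 hn)
    _ ≤ limsup (fun n => (v n : EReal)) atTop := by
        refine (EReal.limsup_add_le ?_ ?_).trans ?_ <;> simp [hK]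

theorem limsup_inv_mul_log_le {a b : ℕ → ℝ} {c : ℝ} (ha : ∀ n, 0 < a n)
    (hab : ∀ n, a n ≤ c * b n) :
    limsup (fun n : ℕ => (((n : ℝ)⁻¹ * Real.log (a n) : ℝ) : EReal)) atTop
      ≤ limsup (fun n : ℕ => (((n : ℝ)⁻¹ * Real.log (b n) : ℝ) : EReal)) atTop := by
  refine limsup_coe_le_of_le_div_add (Real.log c) (.of_forall fun n => ?_)
  have hcb : 0 < c * b n := (ha n).trans_le (hab n)
  have hlog : Real.log (a n) ≤ Real.log c + Real.log (b n) := by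
    rw [← Real.log_mul (left_ne_zero_of_mul hcb.ne') (right_ne_zero_of_mul hcb.ne')]
    exact Real.log_le_log (ha n) (hab n)
  rw [div_eq_inv_mul, ← mul_add]
  exact mul_le_mul_of_nonneg_left hlog (by positivity)

section Pressure

variable {ι X : Type*} [Fintype ι] [MetricSpace X]

theorem P0_eq_zero_of_eventually_Qn0_eq_zero {f : ι → X → X} {φ : X → ℝ}
    (h : ∀ ε, ∀ᶠ n in atTop, Qn0 f φ n ε = 0) : P0 f φ = 0 := by
  have hlimsup : ∀ ε, limsup (fun n : ℕ => (((n : ℝ)⁻¹ * Real.log (Qn0 f φ n ε) : ℝ) : EReal))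
      atTop = 0 := fun ε => by
    rw [limsup_congr ((h ε).mono fun n hn => by rw [hn, Real.log_zero, mul_zero])]
    exact limsup_const _
  simp only [P0, hlimsup]
  exact biSup_const Set.nonempty_Ioi

theorem P0_eq_zero_of_isEmpty [IsEmpty X] (f : ι → X → X) (φ : X → ℝ) : P0 f φ = 0 :=
  P0_eq_zero_of_eventually_Qn0_eq_zero fun ε => .of_forall fun n =>
    Qn0_eq_zero_of_isEmpty f φ n ε

theorem P0_eq_zero_of_isEmpty_index [IsEmpty ι] (f : ι → X → X) (φ : X → ℝ) : P0 f φ = 0 :=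
  P0_eq_zero_of_eventually_Qn0_eq_zero fun ε => (eventually_ne_atTop 0).mono fun _ hn =>
    Qn0_eq_zero_of_isEmpty_index f φ hn ε

theorem P0_le_of_forall_exists_Qn0_le {f g : ι → X → X} {φ : X → ℝ} {c : ℝ}
    (h : ∀ ε > 0, ∃ δ > 0, ∀ n, 0 < Qn0 g φ n ε ∧ Qn0 g φ n ε ≤ c * Qn0 f φ n δ) :
    P0 g φ ≤ P0 f φ := by
  refine iSup₂_le fun ε hε => ?_
  obtain ⟨δ, hδ, hQ⟩ := h ε hε
  exact (limsup_inv_mul_log_le (fun n => (hQ n).1) fun n => (hQ n).2).trans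
    (le_iSup₂_of_le δ hδ le_rfl)

theorem P0_symm_le [CompactSpace X] [Nonempty X] [Nonempty ι] (f : ι → X ≃ₜ X) {φ : X → ℝ}
    (hφ : Continuous φ) : P0 (fun i => ⇑(f i).symm) φ ≤ P0 (fun i => ⇑(f i)) φ := by
  obtain ⟨C, hC⟩ := (isCompact_range hφ.abs).bddAbove
  replace hC : ∀ x, |φ x| ≤ C := fun x => hC ⟨x, rfl⟩
  refine P0_le_of_forall_exists_Qn0_le (c := Real.exp (2 * C)) fun ε hε => ?_
  obtain ⟨δ, hδ₀, hδ⟩ := exists_pos_forall_dist_le (fun i => (f i).continuous) hε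
  exact ⟨δ, hδ₀, fun n => ⟨Qn0_pos (fun i => (f i).symm.continuous) hC hε n,
    Qn0_reverse_le (fun i => (f i).continuous) (fun i => (f i).symm_apply_apply)
      (fun i => (f i).apply_symm_apply) hC hδ₀ hδ n⟩⟩

end Pressure

theorem pressure_of_inverses
    {X : Type*} [MetricSpace X] [CompactSpace X] {m : ℕ}
    (f : Fin m → X ≃ₜ X) (φ : X → ℝ) (hφ : Continuous φ) :
    P0 (fun i => ⇑(f i)) φ = P0 (fun i => ⇑(f i).symm) φ := by
  rcases isEmpty_or_nonempty X with hX | hX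
  · rw [P0_eq_zero_of_isEmpty, P0_eq_zero_of_isEmpty]
  rcases isEmpty_or_nonempty (Fin m) with hm | hm
  · rw [P0_eq_zero_of_isEmpty_index, P0_eq_zero_of_isEmpty_index]
  refine le_antisymm ?_ (P0_symm_le f hφ)
  simpa using P0_symm_le (fun i => (f i).symm) hφ
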